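/- arXiv:1308.1386 — 4 statements merged into one kernel-verified Lean document; each statement's English description precedes it below -/
import Mathlib

section
/- Let G be a group, H a subgroup, and G₁,…,Gₙ subgroups of G distinct from H such that the index of H ∩ Gᵢ in H is infinite for every i. Then for any elements h, g₁,…,gₙ ∈ G, the coset hH is not contained in the union ⋃ᵢ gᵢ(H ∩ Gᵢ). -/
/-!
Translating by `h⁻¹`, `H` itself is covered by the cosets `gᵢ • Kᵢ`. Each of them meets `H`
either not at all or in a left coset of `H ⊓ Kᵢ`, so `H` is a finite union of left cosets of its
subgroups `H ⊓ Kᵢ`, and by B. H. Neumann's lemma one of these has finite index in `H`.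
-/

open Pointwise

namespace Subgroup

variable {G : Type*} [Group G]

theorem exists_mem_inter_smul_subset_smul_inf (H K : Subgroup G) (g : G) :
    ∃ a ∈ H, (H : Set G) ∩ g • (K : Set G) ⊆ a • ((H ⊓ K : Subgroup G) : Set G) := by
  by_cases hmeet : ((H : Set G) ∩ g • (K : Set G)).Nonempty
  · obtain ⟨a, haH, haK⟩ := hmeet
    refine ⟨a, haH, fun x ⟨hxH, hxK⟩ => ?_⟩
    rw [mem_leftCoset_iff] at haK hxK ⊢
    have hK : (g⁻¹ * a)⁻¹ * (g⁻¹ * x) ∈ K := mul_mem (inv_mem haK) hxK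
    simp only [mul_inv_rev, inv_inv, mul_assoc, mul_inv_cancel_left] at hK
    exact mem_inf.mpr ⟨mul_mem (inv_mem haH) hxH, hK⟩
  · rw [Set.not_nonempty_iff_eq_empty] at hmeet
    exact ⟨1, one_mem H, hmeet ▸ Set.empty_subset _⟩

theorem exists_relIndex_ne_zero_of_subset_iUnion_smul {ι : Type*} [Finite ι] {H : Subgroup G}
    {K : ι → Subgroup G} {g : ι → G} (hcover : (H : Set G) ⊆ ⋃ i, g i • (K i : Set G)) :
    ∃ i, (K i).relIndex H ≠ 0 := by
  have := Fintype.ofFinite ι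
  choose a haH hsub using fun i => exists_mem_inter_smul_subset_smul_inf H (K i) (g i)
  have hcoverH : ⋃ i ∈ Finset.univ,
      (⟨a i, haH i⟩ : H) • ((K i).subgroupOf H : Set H) = Set.univ := by
    refine Set.eq_univ_of_forall fun x => ?_
    obtain ⟨i, hi⟩ := Set.mem_iUnion.mp (hcover x.2)
    have hx := hsub i ⟨x.2, hi⟩
    rw [mem_leftCoset_iff] at hx
    simp only [Finset.mem_univ, Set.iUnion_true, Set.mem_iUnion]
    exact ⟨i, by rw [mem_leftCoset_iff]; exact hx.2⟩
  obtain ⟨i, -, hfin⟩ := exists_finiteIndex_of_leftCoset_cover hcoverH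
  exact ⟨i, hfin.index_ne_zero⟩

theorem exists_relIndex_ne_zero_of_smul_subset_iUnion_smul {ι : Type*} [Finite ι]
    {H : Subgroup G} {K : ι → Subgroup G} {h : G} {g : ι → G}
    (hcover : h • (H : Set G) ⊆ ⋃ i, g i • (K i : Set G)) :
    ∃ i, (K i).relIndex H ≠ 0 := by
  refine exists_relIndex_ne_zero_of_subset_iUnion_smul (g := fun i => h⁻¹ * g i) ?_
  rw [← Set.smul_set_subset_smul_set_iff (a := h), Set.smul_set_iUnion]
  simpa only [smul_smul, mul_inv_cancel_left] using hcover

end Subgroup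

theorem coset_not_subset_union_of_infinite_index_general
    {G : Type*} [Group G] (H : Subgroup G) (n : ℕ) (Gs : Fin n → Subgroup G)
    (hinf : ∀ i, (H ⊓ Gs i).relIndex H = 0)
    (h : G) (g : Fin n → G) :
    ¬ (h • (H : Set G) ⊆ ⋃ i, g i • ((H ⊓ Gs i : Subgroup G) : Set G)) := fun hcover =>
  let ⟨i, hi⟩ := Subgroup.exists_relIndex_ne_zero_of_smul_subset_iUnion_smul hcover
  hi (hinf i)

/-- Lemma 5.5: if `H` and the `Gᵢ` are subgroups with `H ≠ Gᵢ` and the index of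
`H ⊓ Gᵢ` in `H` infinite (index `0` in Mathlib's convention), then no left coset
`h • H` is contained in a finite union of left cosets `gᵢ • (H ⊓ Gᵢ)`. -/
theorem coset_not_subset_union_of_infinite_index
    {G : Type*} [Group G] (H : Subgroup G) (n : ℕ) (Gs : Fin n → Subgroup G)
    (hne : ∀ i, Gs i ≠ H)
    (hinf : ∀ i, (H ⊓ Gs i).relIndex H = 0)
    (h : G) (g : Fin n → G) :
    ¬ (h • (H : Set G) ⊆ ⋃ i, g i • ((H ⊓ Gs i : Subgroup G) : Set G)) :=
  coset_not_subset_union_of_infinite_index_general H n Gs hinf h g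
end

section
/- Let G be a group, φ : G → G an injective homomorphism, S = G ⋊_φ ℕ the semigroup with multiplication (g,n)(h,m) = (g·φⁿ(h), n+m). For any two elements (g,n), (h,m) ∈ S, the intersection of principal right ideals (g,n)S ∩ (h,m)S is either empty or equal to (k,l)S for some (k,l) ∈ S. -/
/-- Multiplication on the semidirect product semigroup `S = G ⋊_φ ℕ`. -/
def sdMul {G : Type*} [Group G] (φ : G →* G) (p q : G × ℕ) : G × ℕ :=
  (p.1 * (⇑φ)^[p.2] q.1, p.2 + q.2)

/-- The principal right ideal `pS` in `S = G ⋊_φ ℕ`. -/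
def principalIdeal {G : Type*} [Group G] (φ : G →* G) (p : G × ℕ) : Set (G × ℕ) :=
  {x | ∃ s : G × ℕ, x = sdMul φ p s}

lemma principal_subset_aux {G : Type*} [Group G] (φ : G →* G)
    (g h x y : G) (n m : ℕ) (hnm : n ≤ m)
    (hw : g * (⇑φ)^[n] x = h * (⇑φ)^[m] y) :
    principalIdeal φ (h, m) ⊆ principalIdeal φ (g, n) := by
  rintro ⟨c, d⟩ ⟨⟨v, q⟩, hc⟩
  simp only [sdMul, Prod.mk.injEq] at hc
  obtain ⟨hc1, hc2⟩ := hc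
  refine ⟨(x * (⇑φ)^[m - n] (y⁻¹ * v), (m - n) + q), ?_⟩
  have hiter : ∀ z : G, (⇑φ)^[n] ((⇑φ)^[m - n] z) = (⇑φ)^[m] z := by
    intro z
    rw [← Function.iterate_add_apply, Nat.add_sub_cancel' hnm]
  simp only [sdMul, Prod.mk.injEq]
  constructor
  · rw [hc1]
    rw [iterate_map_mul, hiter, iterate_map_mul,
      iterate_map_inv, ← mul_assoc, ← mul_assoc, hw]
    group
  · omega

/-- The intersection of two principal right ideals of `S = G ⋊_φ ℕ` is either
empty or again a principal right ideal. -/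
theorem principalIdeal_inter {G : Type*} [Group G] (φ : G →* G)
    (hφ : Function.Injective φ) (g h : G) (n m : ℕ) :
    principalIdeal φ (g, n) ∩ principalIdeal φ (h, m) = ∅ ∨
    ∃ k : G, ∃ l : ℕ,
      principalIdeal φ (g, n) ∩ principalIdeal φ (h, m) = principalIdeal φ (k, l) := by
  rcases Set.eq_empty_or_nonempty
      (principalIdeal φ (g, n) ∩ principalIdeal φ (h, m)) with he | hne
  · exact Or.inl he
  · obtain ⟨⟨a, b⟩, ⟨⟨x, p⟩, hx⟩, ⟨⟨y, q⟩, hy⟩⟩ := hne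
    simp only [sdMul, Prod.mk.injEq] at hx hy
    have hw : g * (⇑φ)^[n] x = h * (⇑φ)^[m] y := by rw [← hx.1, ← hy.1]
    rcases le_total n m with hnm | hmn
    · refine Or.inr ⟨h, m, subset_antisymm Set.inter_subset_right ?_⟩
      exact Set.subset_inter (principal_subset_aux φ g h x y n m hnm hw) subset_rfl
    · refine Or.inr ⟨g, n, subset_antisymm Set.inter_subset_left ?_⟩
      exact Set.subset_inter subset_rfl (principal_subset_aux φ h g y x m n hmn hw.symm)
end

section
/- Let G be a group and φ : G → G an injective homomorphism which is pure, i.e. ⋂_{n ∈ ℕ} φⁿ(G) = {e}. Suppose l ≠ l' are natural numbers and g, g' ∈ G, and suppose there exist r₁, r₂ ∈ G with φ^{l'}(r₁⁻¹)·g'⁻¹g·φ^{l}(r₁) = e and φ^{l'}(r₂⁻¹)·g'⁻¹g·φ^{l}(r₂) = e. Then r₁ = r₂. -/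
private lemma fix_one_aux {G : Type*} [Group G] (φ : G →* G)
    (hpure : (⋂ n : ℕ, Set.range ((⇑φ)^[n])) = {(1 : G)})
    (d : ℕ) (hd : 0 < d) (x : G) (hx : (⇑φ)^[d] x = x) : x = 1 := by
  have hmem : ∀ n, x ∈ Set.range ((⇑φ)^[n]) := by
    intro n
    have h1 : (⇑φ)^[d * n] x = x := by
      rw [Function.iterate_mul]; exact Function.iterate_fixed hx n
    have hn : n ≤ d * n := Nat.le_mul_of_pos_left n hd
    refine ⟨(⇑φ)^[d * n - n] x, ?_⟩
    rw [← Function.iterate_add_apply, Nat.add_sub_cancel' hn, h1]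
  have hm : x ∈ ⋂ n : ℕ, Set.range ((⇑φ)^[n]) := Set.mem_iInter.2 hmem
  rwa [hpure, Set.mem_singleton_iff] at hm

/-- If `φ` is pure (`⋂ₙ φⁿ(G) = {e}`), `l ≠ l'`, and `r₁, r₂` both satisfy
`φ^{l'}(r⁻¹)·g'⁻¹g·φ^{l}(r) = e`, then `r₁ = r₂`. -/
theorem pure_unique_solution {G : Type*} [Group G] (φ : G →* G)
    (hφ : Function.Injective φ)
    (hpure : (⋂ n : ℕ, Set.range ((⇑φ)^[n])) = {(1 : G)})
    (l l' : ℕ) (hll : l ≠ l') (g g' r₁ r₂ : G)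
    (h₁ : (⇑φ)^[l'] r₁⁻¹ * (g'⁻¹ * g) * (⇑φ)^[l] r₁ = 1)
    (h₂ : (⇑φ)^[l'] r₂⁻¹ * (g'⁻¹ * g) * (⇑φ)^[l] r₂ = 1) :
    r₁ = r₂ := by
  have e1 : g'⁻¹ * g = (⇑φ)^[l'] r₁ * ((⇑φ)^[l] r₁)⁻¹ := by
    rw [iterate_map_inv, mul_eq_one_iff_eq_inv, inv_mul_eq_iff_eq_mul] at h₁
    exact h₁
  have e2 : g'⁻¹ * g = (⇑φ)^[l'] r₂ * ((⇑φ)^[l] r₂)⁻¹ := by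
    rw [iterate_map_inv, mul_eq_one_iff_eq_inv, inv_mul_eq_iff_eq_mul] at h₂
    exact h₂
  have e : (⇑φ)^[l'] r₁ * ((⇑φ)^[l] r₁)⁻¹ = (⇑φ)^[l'] r₂ * ((⇑φ)^[l] r₂)⁻¹ :=
    e1 ▸ e2
  have hx : (⇑φ)^[l'] (r₂⁻¹ * r₁) = (⇑φ)^[l] (r₂⁻¹ * r₁) := by
    simp only [iterate_map_mul, iterate_map_inv]
    have := congrArg (fun z => ((⇑φ)^[l'] r₂)⁻¹ * z * (⇑φ)^[l] r₁) e
    simpa [mul_assoc] using this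
  have hone : r₂⁻¹ * r₁ = 1 := by
    rcases (lt_or_gt_of_ne hll) with h | h
    · refine fix_one_aux φ hpure (l' - l) (Nat.sub_pos_of_lt h) _ (hφ.iterate l ?_)
      rw [← Function.iterate_add_apply, Nat.add_sub_cancel' h.le, hx]
    · refine fix_one_aux φ hpure (l - l') (Nat.sub_pos_of_lt h) _ (hφ.iterate l' ?_)
      rw [← Function.iterate_add_apply, Nat.add_sub_cancel' h.le, ← hx]
  exact (inv_mul_eq_one.mp hone).symm
end

section
/- Let G be a group, φ : G → G an injective homomorphism, 𝔾 = colim(G →φ G →φ ⋯) with injections ιₙ : G → 𝔾, and φ̄ the induced automorphism of 𝔾. Let S̄ = 𝔾 ⋊_{φ̄} ℤ and embed the semigroup S = G ⋊_φ ℕ into S̄ via (g,n) ↦ (ι₀(g), n). Then every element of S̄ can be written as s⁻¹t with s, t in the image of S, i.e. S̄ = S⁻¹S. -/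
/-- `S̄ = S⁻¹S`: with `𝔾` the direct limit of `G →φ G →φ ⋯` (injections `ιₙ`),
`φ̄` the induced automorphism, and `S̄ = 𝔾 ⋊_{φ̄} ℤ`, every element of `S̄` is of
the form `s⁻¹t` with `s, t` in the image of `S = G ⋊_φ ℕ` under
`(g, n) ↦ (ι₀(g), n)`. -/
theorem envelope_eq_inv_mul {G 𝔾 : Type*} [Group G] [Group 𝔾]
    (φ : G →* G) (hφ : Function.Injective φ)
    (ι : ℕ → (G →* 𝔾))
    (hcompat : ∀ n : ℕ, ι n = (ι (n + 1)).comp φ)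
    (hinj : ∀ n : ℕ, Function.Injective (ι n))
    (hcover : ∀ x : 𝔾, ∃ n : ℕ, ∃ g : G, ι n g = x)
    (φbar : 𝔾 ≃* 𝔾)
    (hbar : ∀ (n : ℕ) (g : G), φbar (ι n g) = ι n (φ g)) :
    ∀ z : 𝔾 ⋊[zpowersHom (MulAut 𝔾) (φbar : MulAut 𝔾)] Multiplicative ℤ,
      ∃ (g h : G) (n m : ℕ),
        (⟨ι 0 g, Multiplicative.ofAdd (n : ℤ)⟩ :
            𝔾 ⋊[zpowersHom (MulAut 𝔾) (φbar : MulAut 𝔾)] Multiplicative ℤ)⁻¹ *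
          ⟨ι 0 h, Multiplicative.ofAdd (m : ℤ)⟩ = z := by
  -- L1 : ι (n+k) (φ^[k] g) = ι n g
  have L1 : ∀ (k n : ℕ) (g : G), ι (n + k) (φ^[k] g) = ι n g := by
    intro k
    induction k with
    | zero => intro n g; simp
    | succ k ih =>
      intro n g
      rw [Function.iterate_succ_apply]
      have : n + (k+1) = (n+1) + k := by ring
      rw [this, ih (n+1) (φ g), hcompat n]
      rfl
  have L2 : ∀ (k n : ℕ) (g : G), (φbar ^ k) (ι n g) = ι n (φ^[k] g) := by
    intro k
    induction k with
    | zero => intro n g; simp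
    | succ k ih =>
      intro n g
      rw [pow_succ, Function.iterate_succ_apply]
      show (φbar ^ k) (φbar (ι n g)) = _
      rw [hbar, ih]
  intro z
  obtain ⟨i, g0, hg0⟩ := hcover z.left
  set j : ℤ := Multiplicative.toAdd z.right with hj
  set N : ℕ := max i j.natAbs with hN
  have hiN : i ≤ N := le_max_left _ _
  have hjN : 0 ≤ j + N := by
    have : (j.natAbs : ℤ) ≤ N := by exact_mod_cast le_max_right i j.natAbs
    omega
  set h : G := φ^[N - i] g0 with hh
  have hzl : ι N h = z.left := by
    rw [hh, ← hg0, ← L1 (N - i) i g0, Nat.add_sub_cancel' hiN]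
  refine ⟨1, h, N, (j + N).toNat, ?_⟩
  have key : ι 0 h = (φbar ^ N) z.left := by
    rw [← hzl, L2, ← L1 N 0 h, Nat.zero_add]
  ext
  · simp only [SemidirectProduct.mul_left, SemidirectProduct.inv_left,
      SemidirectProduct.inv_right, map_one, inv_one, one_mul, zpowersHom_apply]
    rw [key]
    simp [← zpow_natCast, ← zpow_add]
  · simp only [SemidirectProduct.mul_right, SemidirectProduct.inv_right]
    rw [← ofAdd_neg, ← ofAdd_add, Int.toNat_of_nonneg hjN]
    rw [hj]
    simp [add_comm]
end
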